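/- Let X be a set with the Ulam property, and let P(x,E) = P_ca(x,E) + P_pfa(x,E) be a combined non-degenerate finitely additive Markov chain on X with weights q₁, q₂ (so 0 < q₁ < 1 and q₂ = 1 − q₁ > 0). Then no nonzero countably additive measure is invariant for the Markov operator A: every finite measure λ on (X, ⊤) satisfying λ(E) = ∫_X P_ca(x,E) λ(dx) + ∫_X P_pfa(x,E) λ(dx) for all E ⊆ X is identically zero. In particular, if μ is any finitely additive probability measure with Yosida–Hewitt decomposition μ = μ_ca + μ_pfa and μ_ca ≠ 0, then the countably additive component μ_ca is not invariant: μ_ca ≠ A μ_ca. -/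

import Mathlib

open MeasureTheory Set

/-- A finitely additive (signed) measure on all subsets of `X`. -/
def IsFA {X : Type*} (μ : Set X → ℝ) : Prop :=
  μ ∅ = 0 ∧ ∀ A B : Set X, Disjoint A B → μ (A ∪ B) = μ A + μ B

/-- A nonnegative finitely additive measure on all subsets of `X`. -/
def IsNNFA {X : Type*} (μ : Set X → ℝ) : Prop :=
  IsFA μ ∧ ∀ E : Set X, 0 ≤ μ E

/-- A (bounded, nonnegative) countably additive measure on all subsets of `X`:
a nonnegative finitely additive measure which is countably additive. -/
def IsCA {X : Type*} (μ : Set X → ℝ) : Prop :=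
  IsNNFA μ ∧ ∀ E : ℕ → Set X, Pairwise (Function.onFun Disjoint E) →
    HasSum (fun n => μ (E n)) (μ (⋃ n, E n))

/-- A purely finitely additive measure: every countably additive measure
dominated by it is identically zero. -/
def IsPFA {X : Type*} (μ : Set X → ℝ) : Prop :=
  IsNNFA μ ∧ ∀ ν : Set X → ℝ, IsCA ν → (∀ E : Set X, ν E ≤ μ E) → ν = 0

/-- `X` has the Ulam property: every countably additive measure on all subsets of `X`
vanishing on every singleton is identically zero. -/
def UlamProperty (X : Type*) : Prop :=
  ∀ ν : Set X → ℝ, IsCA ν → (∀ x : X, ν {x} = 0) → ν = 0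

lemma nnfa_mono {X : Type*} {μ : Set X → ℝ} (h : IsNNFA μ) {A B : Set X} (hAB : A ⊆ B) :
    μ A ≤ μ B := by
  have hB : B = A ∪ (B \ A) := (Set.union_diff_cancel hAB).symm
  rw [hB, h.1.2 A (B \ A) Set.disjoint_sdiff_right]
  linarith [h.2 (B \ A)]

lemma pfa_singleton {X : Type*} {μ : Set X → ℝ} (h : IsPFA μ) (y : X) : μ {y} = 0 := by
  classical
  set c := μ {y} with hc
  set ν : Set X → ℝ := fun E => if y ∈ E then c else 0 with hν
  have hc0 : 0 ≤ c := h.1.2 {y}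
  have hCA : IsCA ν := by
    refine ⟨⟨⟨by simp [hν], ?_⟩, ?_⟩, ?_⟩
    · intro A B hd
      by_cases hA : y ∈ A
      · have hB : y ∉ B := fun hB => Set.disjoint_left.mp hd hA hB
        simp [hν, hA, hB]
      · by_cases hB : y ∈ B <;> simp [hν, hA, hB]
    · intro E
      by_cases hE : y ∈ E <;> simp [hν, hE, hc0]
    · intro E hE
      by_cases hy : y ∈ ⋃ n, E n
      · obtain ⟨m, hm⟩ := Set.mem_iUnion.mp hy
        have key : ∀ n, ν (E n) = if n = m then c else 0 := by
          intro n
          by_cases hnm : n = m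
          · subst hnm; simp [hν, hm]
          · have : y ∉ E n := fun hyn => Set.disjoint_left.mp (hE hnm) hyn hm
            simp [hν, this, hnm]
        have : ν (⋃ n, E n) = c := by simp [hν, hy]
        rw [this]
        simp only [key]
        exact hasSum_ite_eq m c
      · have h0 : ∀ n, ν (E n) = 0 := fun n =>
          if_neg (fun hyn => hy (Set.mem_iUnion.mpr ⟨n, hyn⟩))
        have : ν (⋃ n, E n) = 0 := if_neg hy
        rw [this]
        simp only [h0]
        exact hasSum_zero
  have hdom : ∀ E : Set X, ν E ≤ μ E := by
    intro E
    by_cases hE : y ∈ E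
    · simpa [hν, hE] using nnfa_mono h.1 (Set.singleton_subset_iff.mpr hE)
    · simpa [hν, hE] using h.1.2 E
  have h0 := h.2 ν hCA hdom
  have := congrFun h0 {y}
  simpa [hν] using this

/-- on a set with the Ulam property, no nonzero countably additive
measure is invariant for the Markov operator of a combined non-degenerate finitely
additive Markov chain; in particular, if a finitely additive probability measure has a
nonzero countably additive component in its Yosida–Hewitt decomposition, then that
component is not invariant. -/
theorem combined_chain_no_nonzero_ca_invariant {X : Type*} (hU : UlamProperty X)
    (q1 q2 : ℝ) (hq1 : 0 < q1) (hq1' : q1 < 1) (hq2 : q2 = 1 - q1)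
    (Pca Ppfa : X → Set X → ℝ)
    (hca : ∀ x : X, IsCA (Pca x) ∧ Pca x Set.univ = q1)
    (hpfa : ∀ x : X, IsPFA (Ppfa x) ∧ Ppfa x Set.univ = q2) :
    (∀ lam : @MeasureTheory.Measure X ⊤, lam Set.univ ≠ ⊤ →
      (∀ E : Set X, (lam E).toReal = (∫ x, Pca x E ∂lam) + ∫ x, Ppfa x E ∂lam) →
      lam = 0) ∧
    (∀ (μ μpfa : Set X → ℝ) (ν : @MeasureTheory.Measure X ⊤),
      IsNNFA μ → μ Set.univ = 1 →
      ν Set.univ ≠ ⊤ → IsPFA μpfa →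
      (∀ E : Set X, μ E = (ν E).toReal + μpfa E) →
      ν ≠ 0 →
      ¬ ∀ E : Set X, (ν E).toReal = (∫ x, Pca x E ∂ν) + ∫ x, Ppfa x E ∂ν) := by
  letI : MeasurableSpace X := ⊤
  have hq2pos : 0 < q2 := by rw [hq2]; linarith
  have main : ∀ lam : Measure X, lam Set.univ ≠ ⊤ →
      (∀ E : Set X, (lam E).toReal = (∫ x, Pca x E ∂lam) + ∫ x, Ppfa x E ∂lam) →
      lam = 0 := by
    intro lam hfin hinv
    haveI : IsFiniteMeasure lam := ⟨hfin.lt_top⟩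
    have hmeas : ∀ f : X → ℝ, Measurable f := fun f s _ => trivial
    have hint : ∀ (f : X → ℝ) (C : ℝ), (∀ x, ‖f x‖ ≤ C) → Integrable f lam := fun f C hb =>
      ⟨(hmeas f).aestronglyMeasurable, HasFiniteIntegral.of_bounded (C := C)
        (Filter.Eventually.of_forall hb)⟩
    have hca_nonneg : ∀ (x : X) (E : Set X), 0 ≤ Pca x E := fun x E => (hca x).1.1.2 E
    have hca_le : ∀ (x : X) (E : Set X), Pca x E ≤ q1 := fun x E =>
      (hca x).2 ▸ nnfa_mono (hca x).1.1 (Set.subset_univ E)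
    have hpfa_nonneg : ∀ (x : X) (E : Set X), 0 ≤ Ppfa x E := fun x E => (hpfa x).1.1.2 E
    have hpfa_le : ∀ (x : X) (E : Set X), Ppfa x E ≤ q2 := fun x E =>
      (hpfa x).2 ▸ nnfa_mono (hpfa x).1.1 (Set.subset_univ E)
    have hint_ca : ∀ E : Set X, Integrable (fun x => Pca x E) lam := fun E =>
      hint _ q1 fun x => by
        rw [Real.norm_eq_abs, abs_of_nonneg (hca_nonneg x E)]; exact hca_le x E
    have hint_pfa : ∀ E : Set X, Integrable (fun x => Ppfa x E) lam := fun E =>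
      hint _ q2 fun x => by
        rw [Real.norm_eq_abs, abs_of_nonneg (hpfa_nonneg x E)]; exact hpfa_le x E
    set κ : Set X → ℝ := fun E => ∫ x, Ppfa x E ∂lam with hκ
    have hκ_eq : ∀ E : Set X, κ E = (lam E).toReal - ∫ x, Pca x E ∂lam := by
      intro E; rw [hinv E]; ring
    have hκCA : IsCA κ := by
      refine ⟨⟨⟨?_, ?_⟩, ?_⟩, ?_⟩
      · have : (fun x => Ppfa x (∅ : Set X)) = fun _ => (0 : ℝ) :=
          funext fun x => (hpfa x).1.1.1.1
        simp only [hκ, this, integral_zero]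
      · intro A B hd
        have : (fun x => Ppfa x (A ∪ B)) = fun x => Ppfa x A + Ppfa x B :=
          funext fun x => (hpfa x).1.1.1.2 A B hd
        simp only [hκ, this]
        exact integral_add (hint_pfa A) (hint_pfa B)
      · intro E
        exact integral_nonneg fun x => hpfa_nonneg x E
      · intro E hE
        have hUnion : lam (⋃ n, E n) = ∑' n, lam (E n) :=
          measure_iUnion hE fun n => trivial
        have h1 : HasSum (fun n => (lam (E n)).toReal) ((lam (⋃ n, E n)).toReal) := by
          rw [hUnion, ENNReal.tsum_toReal_eq fun n => measure_ne_top lam _]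
          exact ENNReal.hasSum_toReal (hUnion ▸ measure_ne_top lam _)
        have hptsum : ∀ x : X, HasSum (fun n => Pca x (E n)) (Pca x (⋃ n, E n)) :=
          fun x => (hca x).1.2 E hE
        have hsummable : Summable fun n => ∫ x, ‖Pca x (E n)‖ ∂lam := by
          have hnorm : (fun n => ∫ x, ‖Pca x (E n)‖ ∂lam)
              = fun n => ∫ x, Pca x (E n) ∂lam := by
            funext n
            congr 1
            funext x
            rw [Real.norm_eq_abs, abs_of_nonneg (hca_nonneg x _)]
          rw [hnorm]
          refine summable_of_sum_range_le (c := q1 * (lam Set.univ).toReal)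
            (fun n => integral_nonneg fun x => hca_nonneg x _) ?_
          intro n
          rw [← integral_finset_sum _ fun i _ => hint_ca _]
          have hconst : ∫ _ : X, q1 ∂lam = q1 * (lam Set.univ).toReal := by
            rw [integral_const, smul_eq_mul, mul_comm]; rfl
          rw [← hconst]
          refine integral_mono (integrable_finset_sum _ fun i _ => hint_ca _)
            (integrable_const q1) ?_
          intro x
          calc ∑ i ∈ Finset.range n, Pca x (E i)
              ≤ Pca x (⋃ n, E n) := sum_le_hasSum _ (fun i _ => hca_nonneg x _) (hptsum x)
            _ ≤ q1 := hca_le x _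
        have h2' := hasSum_integral_of_summable_integral_norm
          (F := fun n x => Pca x (E n)) (fun n => hint_ca _) hsummable
        have h2 : HasSum (fun n => ∫ x, Pca x (E n) ∂lam) (∫ x, Pca x (⋃ n, E n) ∂lam) := by
          rw [show (∫ x, Pca x (⋃ n, E n) ∂lam) = ∫ x, ∑' n, Pca x (E n) ∂lam from
            integral_congr_ae (Filter.Eventually.of_forall fun x => ((hptsum x).tsum_eq).symm)]
          exact h2'
        simpa only [hκ_eq] using h1.sub h2
    have hκsing : ∀ x : X, κ {x} = 0 := by
      intro x
      have : (fun y => Ppfa y ({x} : Set X)) = fun _ => (0 : ℝ) :=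
        funext fun y => pfa_singleton (hpfa y).1 x
      simp only [hκ, this, integral_zero]
    have hκ0 := hU κ hκCA hκsing
    have huniv := congrFun hκ0 Set.univ
    have hκuniv : κ Set.univ = q2 * (lam Set.univ).toReal := by
      have : (fun x => Ppfa x (Set.univ : Set X)) = fun _ => q2 :=
        funext fun x => (hpfa x).2
      simp only [hκ, this, integral_const, smul_eq_mul]
      exact mul_comm _ _
    have hmass : (lam Set.univ).toReal = 0 := by
      rw [hκuniv] at huniv
      simp only [Pi.zero_apply] at huniv
      rcases mul_eq_zero.mp huniv with h | h
      · exact absurd h (ne_of_gt hq2pos)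
      · exact h
    have hmass0 : lam Set.univ = 0 := by
      rcases (ENNReal.toReal_eq_zero_iff _).mp hmass with h | h
      · exact h
      · exact absurd h hfin
    exact Measure.measure_univ_eq_zero.mp hmass0
  refine ⟨main, ?_⟩
  intro μ μpfa ν _ _ hνfin _ _ hν0 hinvν
  exact hν0 (main ν hνfin hinvν)
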